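/- Let K be a Hilbert space and let Q ⊆ B ⊆ K be linear subspaces (not necessarily closed). If Q has finite codimension in B and B is dense in K, then there exists a finite-dimensional subspace D of K such that K is the orthogonal direct sum of the closure of Q and D. -/

import Mathlib

noncomputable section

open MvPolynomial

/-- Polynomials in two variables `z, w` over `ℂ`. -/
abbrev CPoly2 : Type := MvPolynomial (Fin 2) ℂ

/-- Evaluation of a two-variable polynomial at `(z, w)`. -/
def pevalAt (p : CPoly2) (z w : ℂ) : ℂ := eval ![z, w] p

/-- The zero set `Z(p) ⊆ ℂ²`. -/
def zeroSet (p : CPoly2) : Set (ℂ × ℂ) := {x | pevalAt p x.1 x.2 = 0}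

/-- The open bidisk `𝔻²`. -/
def biDisk : Set (ℂ × ℂ) := {x | ‖x.1‖ < 1 ∧ ‖x.2‖ < 1}

/-- `𝔙(p) = Z(p) ∩ 𝔻²`. -/
def distVar (p : CPoly2) : Set (ℂ × ℂ) := zeroSet p ∩ biDisk

/-- A polynomial is inner toral if its zero set lies in `𝔻² ∪ 𝕋² ∪ 𝔼²`. -/
def InnerToral (p : CPoly2) : Prop :=
  ∀ z w : ℂ, pevalAt p z w = 0 →
    (‖z‖ < 1 ∧ ‖w‖ < 1) ∨
    (‖z‖ = 1 ∧ ‖w‖ = 1) ∨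
    (1 < ‖z‖ ∧ 1 < ‖w‖)

/-- `p` and `q` are relatively prime: no non-constant polynomial divides both. -/
def RelPrime (p q : CPoly2) : Prop :=
  ∀ d : CPoly2, d ∣ p → d ∣ q → d.totalDegree = 0

/-- `p` is square free: the square of a non-constant polynomial never divides `p`. -/
def SqFree (p : CPoly2) : Prop :=
  ∀ d : CPoly2, 0 < d.totalDegree → ¬ d * d ∣ p

/-- `(λ, μ)` is a regular point for `p`: `p(λ,μ) = 0` and `∇p(λ,μ) ≠ 0`. -/
def IsRegularPoint (p : CPoly2) (x : ℂ × ℂ) : Prop :=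
  pevalAt p x.1 x.2 = 0 ∧
    (eval ![x.1, x.2] (pderiv (0 : Fin 2) p) ≠ 0 ∨
     eval ![x.1, x.2] (pderiv (1 : Fin 2) p) ≠ 0)

/-- The one-variable polynomial `p_λ(w) = p(λ, w)`. -/
def pSlice (p : CPoly2) (lam : ℂ) : Polynomial ℂ :=
  MvPolynomial.aeval ![Polynomial.C lam, Polynomial.X] p

section Ops

variable {H : Type*} [NormedAddCommGroup H] [NormedSpace ℂ H]

/-- For `q(z,w) = Σ c_{ij} z^i w^j`, `polyOp q S T = q(S,T) = Σ c_{ij} S^i T^j`. -/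
def polyOp (q : CPoly2) (S T : H →L[ℂ] H) : H →L[ℂ] H :=
  ∑ m ∈ q.support, q.coeff m • (S ^ (m 0) * T ^ (m 1))

/-- A pure isometry: an isometry with `⋂ₙ Vⁿ(H) = {0}`. -/
def IsPureIsometry (S : H →L[ℂ] H) : Prop :=
  (∀ x : H, ‖S x‖ = ‖x‖) ∧ (⋂ n : ℕ, Set.range (⇑(S ^ (n + 1)))) = ({0} : Set H)

/-- A pure `p`-isopair: a commuting pair of pure isometries annihilated by `p`. -/
def IsPureIsopair (p : CPoly2) (S T : H →L[ℂ] H) : Prop :=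
  Commute S T ∧ IsPureIsometry S ∧ IsPureIsometry T ∧ polyOp p S T = 0

/-- The set `{Σ_j q_j(S,T) f_j : q_j ∈ ℂ[z,w]}`. -/
def cyclicSet (S T : H →L[ℂ] H) {k : ℕ} (f : Fin k → H) : Set H :=
  {x | ∃ q : Fin k → CPoly2, x = ∑ j, polyOp (q j) S T (f j)}

/-- `(S,T)` is `k`-cyclic: some `f_1, …, f_k` have `closure {Σ q_j(S,T) f_j} = H`. -/
def IsKCyclic (S T : H →L[ℂ] H) (k : ℕ) : Prop :=
  ∃ f : Fin k → H, closure (cyclicSet S T f) = Set.univ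

/-- `(S,T)` is at most nearly `k`-cyclic: some `f_1, …, f_k` have
`closure {Σ q_j(S,T) f_j}` of finite codimension in `H`. -/
def AtMostNearlyKCyclic (S T : H →L[ℂ] H) (k : ℕ) : Prop :=
  ∃ f : Fin k → H,
    FiniteDimensional ℂ (H ⧸ (Submodule.span ℂ (cyclicSet S T f)).topologicalClosure)

/-- `(S,T)` is nearly `k`-cyclic: at most nearly `k`-cyclic but not `k'` for `k' < k`. -/
def NearlyKCyclic (S T : H →L[ℂ] H) (k : ℕ) : Prop :=
  AtMostNearlyKCyclic S T k ∧ ∀ k' < k, ¬ AtMostNearlyKCyclic S T k'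

/-- Restriction of a continuous linear operator to an invariant subspace. -/
def clmRestrict (S : H →L[ℂ] H) (E : Submodule ℂ H) (h : ∀ x ∈ E, S x ∈ E) : E →L[ℂ] E :=
  { toLinearMap := (S : H →ₗ[ℂ] H).restrict h
    cont := by exact Continuous.subtype_mk (S.continuous.comp continuous_subtype_val) _ }

end Ops

/-- Unitary equivalence of pairs: a unitary `U` with `U S₁ = S₂ U` and `U T₁ = T₂ U`. -/
def UnitarilyEquivPairs {H1 H2 : Type*} [NormedAddCommGroup H1] [NormedSpace ℂ H1]
    [NormedAddCommGroup H2] [NormedSpace ℂ H2]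
    (S1 T1 : H1 →L[ℂ] H1) (S2 T2 : H2 →L[ℂ] H2) : Prop :=
  ∃ U : H1 ≃ₗᵢ[ℂ] H2, (∀ x, U (S1 x) = S2 (U x)) ∧ (∀ x, U (T1 x) = T2 (U x))

section Hilbert

variable {H : Type*} [NormedAddCommGroup H] [InnerProductSpace ℂ H] [CompleteSpace H]

/-- The multiplicity of an isometry: `dim ker V*`. -/
def multiplicity' (S : H →L[ℂ] H) : Cardinal :=
  Module.rank ℂ (LinearMap.ker ((ContinuousLinearMap.adjoint S : H →ₗ[ℂ] H)))

/-- Finite bimultiplicity: both `mult S` and `mult T` are finite. -/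
def FiniteBimult (S T : H →L[ℂ] H) : Prop :=
  multiplicity' S < Cardinal.aleph0 ∧ multiplicity' T < Cardinal.aleph0

/-- `dim (ker (S - λ)* ∩ ker (T - μ)*)`. -/
def jointKerDim (S T : H →L[ℂ] H) (lam mu : ℂ) : Cardinal :=
  Module.rank ℂ
    ↥(LinearMap.ker ((ContinuousLinearMap.adjoint (S - lam • 1) : H →ₗ[ℂ] H)) ⊓
      LinearMap.ker ((ContinuousLinearMap.adjoint (T - mu • 1) : H →ₗ[ℂ] H)))

/-- `(S,T)` has rank `α`: for each `j` and every regular point `(λ,μ)` of `p` in `𝔙(p_j)`,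
`dim (ker (S-λ)* ∩ ker (T-μ)*) = α_j`. -/
def HasRank (p : CPoly2) {s : ℕ} (ps : Fin s → CPoly2) (S T : H →L[ℂ] H)
    (α : Fin s → ℕ) : Prop :=
  ∀ j : Fin s, ∀ x : ℂ × ℂ, x ∈ distVar (ps j) → IsRegularPoint p x →
    jointKerDim S T x.1 x.2 = (α j : Cardinal)

/-- Rank for an isopair attached to a single irreducible polynomial. -/
def HasRankIrred (p : CPoly2) (S T : H →L[ℂ] H) (a : ℕ) : Prop :=
  ∀ x : ℂ × ℂ, x ∈ distVar p → IsRegularPoint p x →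
    jointKerDim S T x.1 x.2 = (a : Cardinal)

end Hilbert

/-- A pair of operators acting on some complex Hilbert space. -/
structure HilbertPair where
  space : Type*
  [nacg : NormedAddCommGroup space]
  [ips : InnerProductSpace ℂ space]
  [cs : CompleteSpace space]
  S : space →L[ℂ] space
  T : space →L[ℂ] space

attribute [instance] HilbertPair.nacg HilbertPair.ips HilbertPair.cs

/-!
Over a field, a complement of `Q ∩ B` in `B` is a finite-dimensional `F` with `B ≤ Q + F`.
Since `closure Q + F` is closed (closed plus finite-dimensional) and contains the dense `B`, it is
everything, so `closure Q` has finite codimension; take `D = (closure Q)ᗮ ≃ K ⧸ closure Q`.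
-/

theorem Submodule.exists_finiteDimensional_le_sup {k V : Type*} [DivisionRing k] [AddCommGroup V]
    [Module k V] (Q B : Submodule k V) [FiniteDimensional k (B ⧸ Q.comap B.subtype)] :
    ∃ F : Submodule k V, FiniteDimensional k F ∧ B ≤ Q ⊔ F := by
  obtain ⟨C, hC⟩ := (Q.comap B.subtype).exists_isCompl
  have : FiniteDimensional k C := (Submodule.quotientEquivOfIsCompl _ C hC).finiteDimensional
  refine ⟨C.map B.subtype, inferInstance, ?_⟩
  calc B = (Q.comap B.subtype ⊔ C).map B.subtype := by
        rw [hC.sup_eq_top, Submodule.map_top, Submodule.range_subtype]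
    _ = (Q.comap B.subtype).map B.subtype ⊔ C.map B.subtype := Submodule.map_sup _ _ _
    _ ≤ Q ⊔ C.map B.subtype := sup_le_sup_right (Submodule.map_comap_le _ _) _

theorem Submodule.topologicalClosure_sup_eq_top_of_dense {𝕜 E : Type*} [NontriviallyNormedField 𝕜]
    [CompleteSpace 𝕜] [AddCommGroup E] [Module 𝕜 E] [TopologicalSpace E] [IsTopologicalAddGroup E]
    [ContinuousSMul 𝕜 E] [T2Space E] {Q B F : Submodule 𝕜 E} [FiniteDimensional 𝕜 F]
    (hB : Dense (B : Set E)) (hBQF : B ≤ Q ⊔ F) : Q.topologicalClosure ⊔ F = ⊤ := by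
  have hclosed :=
    Q.topologicalClosure.isClosed_sup_finiteDimensional F Q.isClosed_topologicalClosure
  rw [eq_top_iff']
  intro x
  refine closure_minimal (fun y hy => ?_) hclosed (hB x)
  exact sup_le_sup_right Q.le_topologicalClosure F (hBQF hy)

theorem Submodule.finiteDimensional_quotient_of_sup_eq_top {k V : Type*} [DivisionRing k]
    [AddCommGroup V] [Module k V] {S F : Submodule k V} [FiniteDimensional k F] (h : S ⊔ F = ⊤) :
    FiniteDimensional k (V ⧸ S) := by
  refine Module.Finite.of_surjective (S.mkQ ∘ₗ F.subtype) ?_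
  rw [← LinearMap.range_eq_top, LinearMap.range_comp, Submodule.range_subtype,
    Submodule.map_mkQ_eq_top, h]

theorem statement17_general {K : Type*} [NormedAddCommGroup K] [InnerProductSpace ℂ K]
    [CompleteSpace K] (Q B : Submodule ℂ K)
    (hcodim : FiniteDimensional ℂ (↥B ⧸ Q.comap B.subtype))
    (hdense : Dense (B : Set K)) :
    ∃ D : Submodule ℂ K, FiniteDimensional ℂ D ∧
      (∀ x ∈ Q.topologicalClosure, ∀ y ∈ D, (inner ℂ x y : ℂ) = 0) ∧
      Q.topologicalClosure ⊔ D = ⊤ ∧ Q.topologicalClosure ⊓ D = ⊥ := by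
  obtain ⟨F, hF, hBQF⟩ := Q.exists_finiteDimensional_le_sup B
  have := Submodule.finiteDimensional_quotient_of_sup_eq_top
    (Submodule.topologicalClosure_sup_eq_top_of_dense hdense hBQF)
  refine ⟨Q.topologicalClosureᗮ,
    Q.topologicalClosure.quotientEquivOrthogonal.toLinearEquiv.finiteDimensional,
    fun x hx y hy => Submodule.inner_right_of_mem_orthogonal hx hy,
    Submodule.sup_orthogonal_of_hasOrthogonalProjection, Submodule.inf_orthogonal_eq_bot _⟩

/-- if `Q ⊆ B ⊆ K` with `Q` of finite codimension in `B` and `B` dense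
in `K`, then `K` is the orthogonal direct sum of the closure of `Q` and a finite
dimensional subspace `D`. -/
theorem statement17 {K : Type*} [NormedAddCommGroup K] [InnerProductSpace ℂ K]
    [CompleteSpace K] (Q B : Submodule ℂ K) (hQB : Q ≤ B)
    (hcodim : FiniteDimensional ℂ (↥B ⧸ Q.comap B.subtype))
    (hdense : Dense (B : Set K)) :
    ∃ D : Submodule ℂ K, FiniteDimensional ℂ D ∧
      (∀ x ∈ Q.topologicalClosure, ∀ y ∈ D, (inner ℂ x y : ℂ) = 0) ∧
      Q.topologicalClosure ⊔ D = ⊤ ∧ Q.topologicalClosure ⊓ D = ⊥ :=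
  statement17_general Q B hcodim hdense
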